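/- arXiv:1706.08385 — 3 statements merged into one kernel-verified Lean document; each statement's English description precedes it below -/
import Mathlib

section
/- Let p > 2 > q > 1 and let C₁, C₂ > 0. Then there exists μ* > 0 such that for every μ ∈ (0, μ*) there exist real numbers 0 < r₁ < r₂ such that for all r > 0, the inequality C₁ r^(p-1) + μ C₂ r^(q-1) ≤ r holds if and only if r ∈ [r₁, r₂]. -/
/-!
Dividing by `r` and substituting `r = exp t` turns the inequality into `φ t ≤ 1` with
`φ t = C₁ exp ((p - 2) t) + μ C₂ exp ((q - 2) t)`. Since `p - 2 > 0 > q - 2`, the function `φ`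
is convex and tends to `+∞` at both ends of `ℝ`, so each of its nonempty sublevel sets is a
compact interval. For small `μ` some value of `φ` lies strictly below `1`, and then this
interval is nondegenerate.
-/

open Real Set Filter Topology

theorem ConvexOn.exists_lt_and_setOf_le_eq_Icc {φ : ℝ → ℝ} {c t₀ : ℝ}
    (hφ : ConvexOn ℝ univ φ) (hcont : Continuous φ) (hcoer : Tendsto φ (cocompact ℝ) atTop)
    (ht₀ : φ t₀ < c) :
    ∃ t₁ t₂, t₁ < t₂ ∧ {t | φ t ≤ c} = Icc t₁ t₂ := by
  set S := {t | φ t ≤ c}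
  have hconvex : Convex ℝ S := by simpa using hφ.convex_le c
  obtain ⟨K, hK, hKS⟩ := mem_cocompact.1 (hcoer.eventually (eventually_gt_atTop c))
  have hcompact : IsCompact S :=
    hK.of_isClosed_subset (isClosed_le hcont continuous_const) fun t (ht : φ t ≤ c) =>
      by_contra fun htK => not_le.2 (hKS htK) ht
  obtain ⟨t, ht₀t, ht⟩ : ∃ t, t₀ < t ∧ φ t < c :=
    (hcont.continuousAt.eventually (gt_mem_nhds ht₀)).exists_gt
  refine ⟨sInf S, sSup S, ?_,
    eq_Icc_of_connected_compact (hconvex.isConnected ⟨t₀, ht₀.le⟩) hcompact⟩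
  calc sInf S ≤ t₀ := csInf_le hcompact.bddBelow ht₀.le
    _ < t := ht₀t
    _ ≤ sSup S := le_csSup hcompact.bddAbove ht.le

theorem convexOn_mul_exp_add_mul_exp {A B : ℝ} (hA : 0 ≤ A) (hB : 0 ≤ B) (a b : ℝ) :
    ConvexOn ℝ univ fun t => A * exp (t * a) + B * exp (t * b) :=
  ((convexOn_exp.comp_linearMap (LinearMap.mulRight ℝ a)).smul hA).add
    ((convexOn_exp.comp_linearMap (LinearMap.mulRight ℝ b)).smul hB)

theorem tendsto_mul_exp_add_mul_exp_cocompact {A B a b : ℝ} (hA : 0 < A) (hB : 0 < B)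
    (ha : 0 < a) (hb : b < 0) :
    Tendsto (fun t => A * exp (t * a) + B * exp (t * b)) (cocompact ℝ) atTop := by
  rw [cocompact_eq_atBot_atTop, tendsto_sup]
  constructor
  · exact tendsto_atTop_add_left_of_le _ 0 (fun t => by positivity)
      ((tendsto_exp_atTop.comp (tendsto_id.atBot_mul_const_of_neg hb)).const_mul_atTop hB)
  · exact tendsto_atTop_add_right_of_le _ 0
      ((tendsto_exp_atTop.comp (tendsto_id.atTop_mul_const ha)).const_mul_atTop hA)
      (fun t => by positivity)

theorem mul_rpow_sub_one_add_mul_rpow_sub_one_le_self_iff {r : ℝ} (hr : 0 < r) (A B a b : ℝ) :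
    A * r ^ (a - 1) + B * r ^ (b - 1) ≤ r ↔
      A * exp (log r * (a - 2)) + B * exp (log r * (b - 2)) ≤ 1 := by
  rw [← rpow_def_of_pos hr, ← rpow_def_of_pos hr, ← mul_le_iff_le_one_left hr, add_mul,
    mul_assoc, mul_assoc, ← rpow_add_one hr.ne', ← rpow_add_one hr.ne']
  ring_nf

theorem stmt_0_general (p q C₁ C₂ : ℝ) (hq2 : q < 2) (hp : 2 < p)
    (hC₁ : 0 < C₁) (hC₂ : 0 < C₂) :
    ∃ μstar > (0 : ℝ), ∀ μ ∈ Set.Ioo (0 : ℝ) μstar,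
      ∃ r₁ r₂ : ℝ, 0 < r₁ ∧ r₁ < r₂ ∧
        ∀ r > (0 : ℝ),
          (C₁ * r ^ (p - 1) + μ * C₂ * r ^ (q - 1) ≤ r ↔ r ∈ Set.Icc r₁ r₂) := by
  obtain ⟨t₀, ht₀⟩ : ∃ t₀, C₁ * exp (t₀ * (p - 2)) < 1 := by
    have : Tendsto (fun t => C₁ * exp (t * (p - 2))) atBot (𝓝 (C₁ * 0)) :=
      (tendsto_exp_atBot.comp (tendsto_id.atBot_mul_const (by linarith))).const_mul C₁
    exact (this.eventually (gt_mem_nhds (by simp))).exists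
  refine ⟨(1 - C₁ * exp (t₀ * (p - 2))) / (C₂ * exp (t₀ * (q - 2))),
    div_pos (sub_pos.2 ht₀) (by positivity), fun μ ⟨hμ, hμstar⟩ => ?_⟩
  have hφt₀ : C₁ * exp (t₀ * (p - 2)) + μ * C₂ * exp (t₀ * (q - 2)) < 1 := by
    rw [lt_div_iff₀ (by positivity)] at hμstar
    linarith
  obtain ⟨t₁, t₂, ht, hsublevel⟩ :=
    (convexOn_mul_exp_add_mul_exp hC₁.le (by positivity) _ _).exists_lt_and_setOf_le_eq_Icc
      (by fun_prop) (tendsto_mul_exp_add_mul_exp_cocompact hC₁ (by positivity)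
        (by linarith) (by linarith)) hφt₀
  refine ⟨exp t₁, exp t₂, exp_pos _, exp_lt_exp.2 ht, fun r hr => ?_⟩
  rw [mul_rpow_sub_one_add_mul_rpow_sub_one_le_self_iff hr, mem_Icc, ← le_log_iff_exp_le hr,
    ← log_le_iff_le_exp hr]
  exact Set.ext_iff.1 hsublevel (log r)

/-- For `1 < q < 2 < p` and `C₁, C₂ > 0`, there exists `μ* > 0` such that for every
`μ ∈ (0, μ*)` there are `0 < r₁ < r₂` with: for all `r > 0`,
`C₁ r^(p-1) + μ C₂ r^(q-1) ≤ r` iff `r ∈ [r₁, r₂]`. -/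
theorem stmt_0 (p q C₁ C₂ : ℝ) (hq1 : 1 < q) (hq2 : q < 2) (hp : 2 < p)
    (hC₁ : 0 < C₁) (hC₂ : 0 < C₂) :
    ∃ μstar > (0 : ℝ), ∀ μ ∈ Set.Ioo (0 : ℝ) μstar,
      ∃ r₁ r₂ : ℝ, 0 < r₁ ∧ r₁ < r₂ ∧
        ∀ r > (0 : ℝ),
          (C₁ * r ^ (p - 1) + μ * C₂ * r ^ (q - 1) ≤ r ↔ r ∈ Set.Icc r₁ r₂) :=
  stmt_0_general p q C₁ C₂ hq2 hp hC₁ hC₂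
end

section
/- Let p > 2 > q > 1 and C₁, C₂ > 0. There exists μ* > 0 such that: (a) for μ = μ* there is exactly one r > 0 with C₁ r^(p-1) + μ C₂ r^(q-1) = r, and (b) for μ > μ* there is no r > 0 with C₁ r^(p-1) + μ C₂ r^(q-1) = r. -/
open Real Set

/-- For `1 < q < 2 < p` and `C₁, C₂ > 0`, there is `μ* > 0` such that at `μ = μ*` the
equation `C₁ r^(p-1) + μ C₂ r^(q-1) = r` has exactly one positive solution, and for
`μ > μ*` it has none. -/
theorem stmt_1 (p q C₁ C₂ : ℝ) (hq1 : 1 < q) (hq2 : q < 2) (hp : 2 < p)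
    (hC₁ : 0 < C₁) (hC₂ : 0 < C₂) :
    ∃ μstar > (0 : ℝ),
      (∃! r : ℝ, 0 < r ∧ C₁ * r ^ (p - 1) + μstar * C₂ * r ^ (q - 1) = r) ∧
      (∀ μ > μstar, ¬ ∃ r : ℝ, 0 < r ∧ C₁ * r ^ (p - 1) + μ * C₂ * r ^ (q - 1) = r) := by
  set a : ℝ := 2 - q with ha_def
  set b : ℝ := p - q with hb_def
  have ha : 0 < a := by simp only [ha_def]; linarith
  have hb : 0 < b := by simp only [hb_def]; linarith
  have hab : 0 < b - a := by simp only [ha_def, hb_def]; linarith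
  have hCb : 0 < C₁ * b := mul_pos hC₁ hb
  have hquot : 0 < a / (C₁ * b) := div_pos ha hCb
  set h : ℝ → ℝ := fun r => r ^ a - C₁ * r ^ b with hh
  set r₀ : ℝ := (a / (C₁ * b)) ^ ((b - a)⁻¹) with hr₀def
  have hr₀pos : 0 < r₀ := rpow_pos_of_pos hquot _
  have hr₀pow : r₀ ^ (b - a) = a / (C₁ * b) := by
    rw [hr₀def, ← rpow_mul hquot.le, inv_mul_cancel₀ hab.ne', rpow_one]
  -- derivative of h
  have hderiv : ∀ x : ℝ, 0 < x →
      HasDerivAt h (a * x ^ (a - 1) - C₁ * (b * x ^ (b - 1))) x := by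
    intro x hx
    exact (Real.hasDerivAt_rpow_const (Or.inl hx.ne')).sub
      ((Real.hasDerivAt_rpow_const (Or.inl hx.ne')).const_mul C₁)
  have hsplit : ∀ x : ℝ, 0 < x → x ^ (b - 1) = x ^ (b - a) * x ^ (a - 1) := by
    intro x hx
    rw [← rpow_add hx]; congr 1; ring
  -- key: unique strict max at r₀
  have hmax : ∀ r : ℝ, 0 < r → r ≠ r₀ → h r < h r₀ := by
    intro r hr hne
    rcases lt_or_gt_of_ne hne with hlt | hgt
    · have hmono : StrictMonoOn h (Icc r r₀) := by
        apply strictMonoOn_of_deriv_pos (convex_Icc _ _)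
        · intro x hx
          exact (hderiv x (lt_of_lt_of_le hr hx.1)).continuousAt.continuousWithinAt
        · intro x hx
          rw [interior_Icc] at hx
          have hx0 : 0 < x := lt_trans hr hx.1
          rw [(hderiv x hx0).deriv]
          have hxlt : x ^ (b - a) < a / (C₁ * b) := by
            rw [← hr₀pow]
            exact rpow_lt_rpow hx0.le (hx.2.trans_le le_rfl) hab
          have h1 : C₁ * b * x ^ (b - a) < a := by
            rw [lt_div_iff₀ hCb] at hxlt; linarith [hxlt]
          have h2 : C₁ * (b * x ^ (b - 1)) = (C₁ * b * x ^ (b - a)) * x ^ (a - 1) := by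
            rw [hsplit x hx0]; ring
          have h3 : 0 < x ^ (a - 1) := rpow_pos_of_pos hx0 _
          rw [h2]
          nlinarith [h3, h1]
      exact hmono (left_mem_Icc.2 hlt.le) (right_mem_Icc.2 hlt.le) hlt
    · have hanti : StrictAntiOn h (Icc r₀ r) := by
        apply strictAntiOn_of_deriv_neg (convex_Icc _ _)
        · intro x hx
          exact (hderiv x (lt_of_lt_of_le hr₀pos hx.1)).continuousAt.continuousWithinAt
        · intro x hx
          rw [interior_Icc] at hx
          have hx0 : 0 < x := lt_trans hr₀pos hx.1
          rw [(hderiv x hx0).deriv]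
          have hxlt : a / (C₁ * b) < x ^ (b - a) := by
            rw [← hr₀pow]
            exact rpow_lt_rpow hr₀pos.le hx.1 hab
          have h1 : a < C₁ * b * x ^ (b - a) := by
            rw [div_lt_iff₀ hCb] at hxlt; linarith [hxlt]
          have h2 : C₁ * (b * x ^ (b - 1)) = (C₁ * b * x ^ (b - a)) * x ^ (a - 1) := by
            rw [hsplit x hx0]; ring
          have h3 : 0 < x ^ (a - 1) := rpow_pos_of_pos hx0 _
          rw [h2]
          nlinarith [h3, h1]
      exact hanti (left_mem_Icc.2 hgt.le) (right_mem_Icc.2 hgt.le) hgt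
  -- positivity of h r₀
  have hr₀a : 0 < r₀ ^ a := rpow_pos_of_pos hr₀pos _
  have hbsplit : r₀ ^ b = (a / (C₁ * b)) * r₀ ^ a := by
    rw [← hr₀pow, ← rpow_add hr₀pos]; congr 1; ring
  have hhr₀ : h r₀ = (1 - a / b) * r₀ ^ a := by
    simp only [hh, hbsplit]
    field_simp
  have hhr₀pos : 0 < h r₀ := by
    rw [hhr₀]
    apply mul_pos _ hr₀a
    have : a / b < 1 := (div_lt_one hb).2 (by linarith)
    linarith
  -- equivalence of equation with h r = μ * C₂
  have heqv : ∀ μ r : ℝ, 0 < r →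
      (C₁ * r ^ (p - 1) + μ * C₂ * r ^ (q - 1) = r ↔ h r = μ * C₂) := by
    intro μ r hr
    have hq1' : (0:ℝ) < r ^ (q - 1) := rpow_pos_of_pos hr _
    have e1 : r ^ (p - 1) = r ^ b * r ^ (q - 1) := by
      rw [← rpow_add hr]; congr 1; simp only [hb_def]; ring
    have e2 : r = r ^ a * r ^ (q - 1) := by
      rw [← rpow_add hr]
      nth_rewrite 1 [← rpow_one r]
      congr 1; simp only [ha_def]; ring
    constructor
    · intro heq
      have : (C₁ * r ^ b + μ * C₂) * r ^ (q - 1) = r ^ a * r ^ (q - 1) := by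
        rw [← e2]; rw [e1] at heq; linarith [heq]
      have := mul_right_cancel₀ hq1'.ne' this
      simp only [hh]; linarith
    · intro heq
      simp only [hh] at heq
      rw [e1]
      conv_rhs => rw [e2]
      linear_combination (-(r ^ (q - 1))) * heq
  refine ⟨h r₀ / C₂, div_pos hhr₀pos hC₂, ⟨r₀, ⟨hr₀pos, ?_⟩, ?_⟩, ?_⟩
  · rw [heqv _ _ hr₀pos, div_mul_cancel₀ _ hC₂.ne']
  · rintro r ⟨hr, heq⟩
    rw [heqv _ _ hr, div_mul_cancel₀ _ hC₂.ne'] at heq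
    by_contra hne
    exact absurd heq (ne_of_lt (hmax r hr hne))
  · rintro μ hμ ⟨r, hr, heq⟩
    rw [heqv _ _ hr] at heq
    have hle : h r ≤ h r₀ := by
      rcases eq_or_ne r r₀ with rfl | hne
      · exact le_refl _
      · exact (hmax r hr hne).le
    have : h r₀ / C₂ * C₂ < μ * C₂ := by
      exact mul_lt_mul_of_pos_right hμ hC₂
    rw [div_mul_cancel₀ _ hC₂.ne'] at this
    linarith
end

section
/- Let V be a normed space, Φ : V → ℝ Gâteaux differentiable, Ψ : V → ℝ convex and Gâteaux differentiable, and K ⊆ V convex. Suppose ū ∈ K satisfies the Szulkin critical point inequality ⟨DΦ(ū), ū - v⟩ + Ψ(v) - Ψ(ū) ≥ 0 for all v ∈ K, and suppose v̄ ∈ K satisfies DΨ(v̄) = DΦ(ū). Then ⟨DΨ(v̄), v̄ - ū⟩ ≥ Ψ(v̄) - Ψ(ū) and, combined with the convexity inequality Ψ(ū) - Ψ(v̄) ≥ ⟨DΨ(v̄), ū - v̄⟩, one gets Ψ(v̄) - Ψ(ū) = ⟨DΨ(v̄), v̄ - ū⟩. -/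
open Filter Topology

lemma subgrad_aux {V : Type*} [NormedAddCommGroup V] [NormedSpace ℝ V]
    (Ψ : V → ℝ) (DΨ : V → V →L[ℝ] ℝ)
    (hΨdiff : ∀ x w : V, Tendsto (fun t : ℝ => (Ψ (x + t • w) - Ψ x) / t)
      (𝓝[≠] 0) (𝓝 (DΨ x w)))
    (hΨconv : ConvexOn ℝ Set.univ Ψ) (x w : V) :
    DΨ x w ≤ Ψ (x + w) - Ψ x := by
  have hmono : Tendsto (fun t : ℝ => (Ψ (x + t • w) - Ψ x) / t) (𝓝[>] 0)
      (𝓝 (DΨ x w)) :=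
    (hΨdiff x w).mono_left (nhdsWithin_mono 0 fun t ht => ne_of_gt ht)
  refine le_of_tendsto hmono ?_
  filter_upwards [Ioo_mem_nhdsGT_of_mem (by norm_num : (0:ℝ) ∈ Set.Ico 0 1)]
    with t ht
  obtain ⟨ht0, ht1⟩ := ht
  have h1 : Ψ ((1 - t) • x + t • (x + w)) ≤ (1 - t) * Ψ x + t * Ψ (x + w) :=
    hΨconv.2 (Set.mem_univ x) (Set.mem_univ (x + w)) (by linarith) ht0.le
      (by ring)
  have hxeq : (1 - t) • x + t • (x + w) = x + t • w := by
    rw [smul_add, sub_smul, one_smul]; abel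
  rw [hxeq] at h1
  rw [div_le_iff₀ ht0]
  nlinarith

/-- Abstract skeleton of the variational principle: if `ū ∈ K` is a Szulkin critical
point of `Ψ_K - Φ` and `v̄ ∈ K` satisfies `DΨ(v̄) = DΦ(ū)`, then
`⟨DΨ(v̄), v̄ - ū⟩ ≥ Ψ(v̄) - Ψ(ū)`, and in fact equality holds. -/
theorem stmt_17 {V : Type*} [NormedAddCommGroup V] [NormedSpace ℝ V]
    (K : Set V) (hK : Convex ℝ K)
    (Φ Ψ : V → ℝ) (DΦ DΨ : V → V →L[ℝ] ℝ)
    (hΦdiff : ∀ x w : V, Tendsto (fun t : ℝ => (Φ (x + t • w) - Φ x) / t)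
      (𝓝[≠] 0) (𝓝 (DΦ x w)))
    (hΨdiff : ∀ x w : V, Tendsto (fun t : ℝ => (Ψ (x + t • w) - Ψ x) / t)
      (𝓝[≠] 0) (𝓝 (DΨ x w)))
    (hΨconv : ConvexOn ℝ Set.univ Ψ)
    (ubar vbar : V) (hu : ubar ∈ K) (hv : vbar ∈ K)
    (hcrit : ∀ v ∈ K, DΦ ubar (ubar - v) + Ψ v - Ψ ubar ≥ 0)
    (heq : DΨ vbar = DΦ ubar) :
    DΨ vbar (vbar - ubar) ≥ Ψ vbar - Ψ ubar ∧
      Ψ vbar - Ψ ubar = DΨ vbar (vbar - ubar) := by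
  have hsub := subgrad_aux Ψ DΨ hΨdiff hΨconv vbar (ubar - vbar)
  rw [show vbar + (ubar - vbar) = ubar by abel] at hsub
  have hneg : DΨ vbar (ubar - vbar) = - DΨ vbar (vbar - ubar) := by
    rw [show ubar - vbar = -(vbar - ubar) by abel, map_neg]
  rw [hneg] at hsub
  have hc := hcrit vbar hv
  rw [← heq] at hc
  constructor
  · linarith
  · linarith
end
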